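/- The fusion intertwiner τ(r) : W ⊗ V → W defined by τ(r)(w^j ⊗ v⁰) = q^j w^j and τ(r)(w^j ⊗ v¹) = (q^{j+1} − q^{-j-1}) r^{-1} w^{j+1} intertwines the U_q(b⁺)-representations: ρ⁺_{q^{-1}z, q^{-1}r}(u) ∘ τ(r) = τ(r) ∘ (ρ⁺_{z,r} ⊗ π_z)(Δ(u)) for every generator u ∈ {e₀, e₁, k₀, k₁}. -/

import Mathlib

noncomputable section

open Finsupp Matrix

/-- The infinite-dimensional space `W = ⊕_{j≥0} ℂ w^j`. -/
abbrev Wsp : Type := ℕ →₀ ℂ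

abbrev EndW : Type := Module.End ℂ Wsp

/-- The basis vector `w^j`. -/
def wv (j : ℕ) : Wsp := Finsupp.single j 1

/-- The linear operator on `W` determined by its values on the basis. -/
def mkOp (g : ℕ → Wsp) : EndW :=
  Finsupp.lsum ℂ fun j => LinearMap.toSpanSingleton ℂ Wsp (g j)

/-- The annihilation operator `a`. -/
def opA : EndW := mkOp fun j => match j with | 0 => 0 | i + 1 => wv i

/-- The creation operator `a†`. -/
def opAdag (q : ℂ) : EndW := mkOp fun j => (1 - q ^ (2 * (j + 1))) • wv (j + 1)

/-- The diagonal operator `f(D)`. -/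
def opDiag (f : ℕ → ℂ) : EndW := mkOp fun j => f j • wv j

/-- `ρ⁺_{z,r}(e₀)`. -/
def rhoE0 (q z : ℂ) : EndW := (q⁻¹ * z / (q - q⁻¹)) • opAdag q

/-- `ρ⁺_{z,r}(e₁)`. -/
def rhoE1 (q z : ℂ) : EndW := (q * z / (q - q⁻¹)) • opA

/-- `ρ⁺_{z,r}(k₀) = r q^{2D}`. -/
def rhoK0 (q r : ℂ) : EndW := r • opDiag fun j => q ^ (2 * j)

/-- `ρ⁺_{z,r}(k₁) = r⁻¹ q^{-2D}`. -/
def rhoK1 (q r : ℂ) : EndW := r⁻¹ • opDiag fun j => (q ^ (2 * j))⁻¹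

/-- `π_z(e₀) = z E₂₁`. -/
def piE0 (z : ℂ) : Matrix (Fin 2) (Fin 2) ℂ := !![0, 0; z, 0]

/-- `π_z(e₁) = z E₁₂`. -/
def piE1 (z : ℂ) : Matrix (Fin 2) (Fin 2) ℂ := !![0, z; 0, 0]

/-- `π_z(k₀) = diag(q⁻¹, q)`. -/
def piK0 (q : ℂ) : Matrix (Fin 2) (Fin 2) ℂ := !![q⁻¹, 0; 0, q]

/-- `π_z(k₁) = diag(q, q⁻¹)`. -/
def piK1 (q : ℂ) : Matrix (Fin 2) (Fin 2) ℂ := !![q, 0; 0, q⁻¹]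

/-- The operator `X ⊗ Y` on `W ⊗ ℂ²` as a 2×2 matrix over `End(W)`. -/
def tensOp (X : EndW) (Y : Matrix (Fin 2) (Fin 2) ℂ) : Matrix (Fin 2) (Fin 2) EndW :=
  Matrix.of fun i k => Y i k • X

/-- The components of the fusion intertwiner `ι(r) : W → W ⊗ V`,
`ι(r)(w^j) = (q^{-j-1} - q^{j+1}) w^{j+1} ⊗ v⁰ + q^{j+1} r w^j ⊗ v¹`. -/
def iotaC (q r : ℂ) : Fin 2 → EndW :=
  ![mkOp fun j => ((q⁻¹) ^ (j + 1) - q ^ (j + 1)) • wv (j + 1),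
    opDiag fun j => q ^ (j + 1) * r]

/-- The components of the fusion intertwiner `τ(r) : W ⊗ V → W`,
`τ(r)(w^j ⊗ v⁰) = q^j w^j`, `τ(r)(w^j ⊗ v¹) = (q^{j+1} - q^{-j-1}) r⁻¹ w^{j+1}`. -/
def tauC (q r : ℂ) : Fin 2 → EndW :=
  ![opDiag fun j => q ^ j,
    mkOp fun j => ((q ^ (j + 1) - (q⁻¹) ^ (j + 1)) * r⁻¹) • wv (j + 1)]

/-!
Every operator involved acts on the basis `w^j` of `W` as a weighted shift, so each component
of each intertwining relation can be checked on basis vectors, where it becomes an identity of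
rational functions of `q` whose only denominator is `q - q⁻¹`.  For `e₁` on `w^{j+1} ⊗ v¹`, for
instance, it is the recursion `q^{j+2} - q^{-j-2} = q^{-j-1} (q - q⁻¹) + q (q^{j+1} - q^{-j-1})`.
-/

lemma mkOp_wv (g : ℕ → Wsp) (j : ℕ) : mkOp g (wv j) = g j := by
  simp [mkOp, wv]

lemma endW_ext_wv {f g : EndW} (h : ∀ j, f (wv j) = g (wv j)) : f = g :=
  Finsupp.lhom_ext' fun j => LinearMap.ext_ring (h j)

section

variable (q z r : ℂ) (j : ℕ)

lemma opDiag_wv (f : ℕ → ℂ) : opDiag f (wv j) = f j • wv j := mkOp_wv _ _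

lemma opA_wv_zero : opA (wv 0) = 0 := mkOp_wv _ _

lemma opA_wv_succ : opA (wv (j + 1)) = wv j := mkOp_wv _ _

lemma opAdag_wv : opAdag q (wv j) = (1 - q ^ (2 * (j + 1))) • wv (j + 1) := mkOp_wv _ _

lemma tauC_zero_wv : tauC q r 0 (wv j) = q ^ j • wv j := opDiag_wv _ _

lemma tauC_one_wv :
    tauC q r 1 (wv j) = ((q ^ (j + 1) - (q ^ (j + 1))⁻¹) * r⁻¹) • wv (j + 1) := by
  rw [← inv_pow]
  exact mkOp_wv _ _

lemma rhoE0_wv :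
    rhoE0 q z (wv j) = (q⁻¹ * z / (q - q⁻¹) * (1 - q ^ (2 * (j + 1)))) • wv (j + 1) := by
  rw [rhoE0, LinearMap.smul_apply, opAdag_wv, smul_smul]

lemma rhoE1_wv_zero : rhoE1 q z (wv 0) = 0 := by
  rw [rhoE1, LinearMap.smul_apply, opA_wv_zero, smul_zero]

lemma rhoE1_wv_succ : rhoE1 q z (wv (j + 1)) = (q * z / (q - q⁻¹)) • wv j := by
  rw [rhoE1, LinearMap.smul_apply, opA_wv_succ]

lemma rhoK0_wv : rhoK0 q r (wv j) = (r * q ^ (2 * j)) • wv j := by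
  rw [rhoK0, LinearMap.smul_apply, opDiag_wv, smul_smul]

lemma rhoK1_wv : rhoK1 q r (wv j) = (r⁻¹ * (q ^ (2 * j))⁻¹) • wv j := by
  rw [rhoK1, LinearMap.smul_apply, opDiag_wv, smul_smul]

end

section

variable {q : ℂ} (z : ℂ) {r : ℂ}

lemma rhoE0_mul_tauC_zero (hq0 : q ≠ 0) (hq : q ^ 2 ≠ 1) (hr : r ≠ 0) :
    rhoE0 q (q⁻¹ * z) * tauC q r 0 = tauC q r 0 * rhoE0 q z + z • (tauC q r 1 * rhoK0 q r) := by
  have hq₁ : q ^ 2 - 1 ≠ 0 := sub_ne_zero.2 hq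
  refine endW_ext_wv fun j => ?_
  simp only [Module.End.mul_apply, LinearMap.add_apply, LinearMap.smul_apply, map_smul, rhoE0_wv,
    rhoK0_wv, tauC_zero_wv, tauC_one_wv, smul_smul, ← add_smul]
  congr 1
  field_simp
  ring

lemma rhoE0_mul_tauC_one (hq0 : q ≠ 0) (hq : q ^ 2 ≠ 1) :
    rhoE0 q (q⁻¹ * z) * tauC q r 1 = tauC q r 1 * rhoE0 q z := by
  have hq₁ : q ^ 2 - 1 ≠ 0 := sub_ne_zero.2 hq
  refine endW_ext_wv fun j => ?_
  simp only [Module.End.mul_apply, map_smul, rhoE0_wv, tauC_one_wv, smul_smul]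
  congr 1
  field_simp
  ring

lemma rhoE1_mul_tauC_zero (hq0 : q ≠ 0) :
    rhoE1 q (q⁻¹ * z) * tauC q r 0 = tauC q r 0 * rhoE1 q z := by
  refine endW_ext_wv fun j => ?_
  rcases j with _ | j
  · simp [rhoE1_wv_zero, tauC_zero_wv]
  simp only [Module.End.mul_apply, map_smul, rhoE1_wv_succ, tauC_zero_wv, smul_smul]
  congr 1
  field_simp
  ring

lemma rhoE1_mul_tauC_one (hq0 : q ≠ 0) (hq : q ^ 2 ≠ 1) :
    rhoE1 q (q⁻¹ * z) * tauC q r 1 = z • (tauC q r 0 * rhoK1 q r) + tauC q r 1 * rhoE1 q z := by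
  have hq₁ : q ^ 2 - 1 ≠ 0 := sub_ne_zero.2 hq
  refine endW_ext_wv fun j => ?_
  rcases j with _ | j <;>
    simp only [Module.End.mul_apply, LinearMap.add_apply, LinearMap.smul_apply, map_smul, map_zero,
      add_zero, rhoE1_wv_zero, rhoE1_wv_succ, rhoK1_wv, tauC_zero_wv, tauC_one_wv, smul_smul,
      ← add_smul] <;>
    congr 1 <;> field_simp <;> ring

lemma rhoK0_mul_tauC_zero :
    rhoK0 q (q⁻¹ * r) * tauC q r 0 = q⁻¹ • (tauC q r 0 * rhoK0 q r) := by
  refine endW_ext_wv fun j => ?_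
  simp only [Module.End.mul_apply, LinearMap.smul_apply, map_smul, rhoK0_wv, tauC_zero_wv, smul_smul]
  congr 1
  ring

lemma rhoK0_mul_tauC_one (hq0 : q ≠ 0) :
    rhoK0 q (q⁻¹ * r) * tauC q r 1 = q • (tauC q r 1 * rhoK0 q r) := by
  refine endW_ext_wv fun j => ?_
  simp only [Module.End.mul_apply, LinearMap.smul_apply, map_smul, rhoK0_wv, tauC_one_wv, smul_smul]
  congr 1
  field_simp
  ring

lemma rhoK1_mul_tauC_zero :
    rhoK1 q (q⁻¹ * r) * tauC q r 0 = q • (tauC q r 0 * rhoK1 q r) := by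
  refine endW_ext_wv fun j => ?_
  simp only [Module.End.mul_apply, LinearMap.smul_apply, map_smul, rhoK1_wv, tauC_zero_wv,
    mul_inv, inv_inv, smul_smul]
  congr 1
  ring

lemma rhoK1_mul_tauC_one (hq0 : q ≠ 0) :
    rhoK1 q (q⁻¹ * r) * tauC q r 1 = q⁻¹ • (tauC q r 1 * rhoK1 q r) := by
  refine endW_ext_wv fun j => ?_
  simp only [Module.End.mul_apply, LinearMap.smul_apply, map_smul, rhoK1_wv, tauC_one_wv,
    mul_inv, inv_inv, smul_smul]
  congr 1
  field_simp
  ring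

lemma tauC_intertwines_e0 (hq0 : q ≠ 0) (hq : q ^ 2 ≠ 1) (hr : r ≠ 0) :
    (fun k => rhoE0 q (q⁻¹ * z) * tauC q r k) =
      vecMul (tauC q r) (tensOp (rhoE0 q z) 1 + tensOp (rhoK0 q r) (piE0 z)) := by
  funext k
  fin_cases k
  · simp [vecMul, vec2_dotProduct, tensOp, piE0, rhoE0_mul_tauC_zero z hq0 hq hr]
  · simp [vecMul, vec2_dotProduct, tensOp, piE0, rhoE0_mul_tauC_one z hq0 hq]

lemma tauC_intertwines_e1 (hq0 : q ≠ 0) (hq : q ^ 2 ≠ 1) :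
    (fun k => rhoE1 q (q⁻¹ * z) * tauC q r k) =
      vecMul (tauC q r) (tensOp (rhoE1 q z) 1 + tensOp (rhoK1 q r) (piE1 z)) := by
  funext k
  fin_cases k
  · simp [vecMul, vec2_dotProduct, tensOp, piE1, rhoE1_mul_tauC_zero z hq0]
  · simp [vecMul, vec2_dotProduct, tensOp, piE1, rhoE1_mul_tauC_one z hq0 hq]

lemma tauC_intertwines_k0 (hq0 : q ≠ 0) :
    (fun k => rhoK0 q (q⁻¹ * r) * tauC q r k) =
      vecMul (tauC q r) (tensOp (rhoK0 q r) (piK0 q)) := by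
  funext k
  fin_cases k
  · simp [vecMul, vec2_dotProduct, tensOp, piK0, rhoK0_mul_tauC_zero]
  · simp [vecMul, vec2_dotProduct, tensOp, piK0, rhoK0_mul_tauC_one hq0]

lemma tauC_intertwines_k1 (hq0 : q ≠ 0) :
    (fun k => rhoK1 q (q⁻¹ * r) * tauC q r k) =
      vecMul (tauC q r) (tensOp (rhoK1 q r) (piK1 q)) := by
  funext k
  fin_cases k
  · simp [vecMul, vec2_dotProduct, tensOp, piK1, rhoK1_mul_tauC_zero]
  · simp [vecMul, vec2_dotProduct, tensOp, piK1, rhoK1_mul_tauC_one hq0]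

end

theorem tau_intertwiner_general (q z r : ℂ) (hq0 : q ≠ 0) (hq1 : q ≠ 1) (hqm1 : q ≠ -1)
    (hr : r ≠ 0) :
    (fun k => rhoE0 q (q⁻¹ * z) * tauC q r k) =
      Matrix.vecMul (tauC q r) (tensOp (rhoE0 q z) 1 + tensOp (rhoK0 q r) (piE0 z)) ∧
    (fun k => rhoE1 q (q⁻¹ * z) * tauC q r k) =
      Matrix.vecMul (tauC q r) (tensOp (rhoE1 q z) 1 + tensOp (rhoK1 q r) (piE1 z)) ∧
    (fun k => rhoK0 q (q⁻¹ * r) * tauC q r k) =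
      Matrix.vecMul (tauC q r) (tensOp (rhoK0 q r) (piK0 q)) ∧
    (fun k => rhoK1 q (q⁻¹ * r) * tauC q r k) =
      Matrix.vecMul (tauC q r) (tensOp (rhoK1 q r) (piK1 q)) := by
  have hq : q ^ 2 ≠ 1 := fun h => (sq_eq_one_iff.1 h).elim hq1 hqm1
  exact ⟨tauC_intertwines_e0 z hq0 hq hr, tauC_intertwines_e1 z hq0 hq,
    tauC_intertwines_k0 hq0, tauC_intertwines_k1 hq0⟩

/-- `τ(r)` intertwines `(ρ⁺_{z,r} ⊗ π_z) ∘ Δ` with `ρ⁺_{q⁻¹z,q⁻¹r}` on all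
generators `e₀, e₁, k₀, k₁` of `U_q(b⁺)`.  Here `Δ(e_i) = e_i ⊗ 1 + k_i ⊗ e_i` and
`Δ(k_i) = k_i ⊗ k_i`, and composition with the row vector `τ(r)` is `vecMul`. -/
theorem tau_intertwiner (q z r : ℂ) (hq0 : q ≠ 0) (hq1 : q ≠ 1) (hqm1 : q ≠ -1)
    (hz : z ≠ 0) (hr : r ≠ 0) :
    (fun k => rhoE0 q (q⁻¹ * z) * tauC q r k) =
      Matrix.vecMul (tauC q r) (tensOp (rhoE0 q z) 1 + tensOp (rhoK0 q r) (piE0 z)) ∧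
    (fun k => rhoE1 q (q⁻¹ * z) * tauC q r k) =
      Matrix.vecMul (tauC q r) (tensOp (rhoE1 q z) 1 + tensOp (rhoK1 q r) (piE1 z)) ∧
    (fun k => rhoK0 q (q⁻¹ * r) * tauC q r k) =
      Matrix.vecMul (tauC q r) (tensOp (rhoK0 q r) (piK0 q)) ∧
    (fun k => rhoK1 q (q⁻¹ * r) * tauC q r k) =
      Matrix.vecMul (tauC q r) (tensOp (rhoK1 q r) (piK1 q)) :=
  tau_intertwiner_general q z r hq0 hq1 hqm1 hr
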